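/- Let C be a v_0-unsolvable configuration on the Flower snark J_3 with C(z_0) = C(v_1) = C(v_{−1}) = 0, and let A = {z_1, x_1, y_1}, B = {z_{−1}, x_{−1}, y_{−1}}, E = {x_0, y_0}. Then C(A) ≤ 8, C(B) ≤ 8, and C(E) ≤ 4, where C(S) denotes the total number of pebbles on the vertices of S. -/

import Mathlib

/-- A pebbling move on the graph `G`: remove two pebbles from a vertex `u`
(which has at least two pebbles) and add one pebble to a neighbor `v` of `u`. -/
def PebblingMove {V : Type} [DecidableEq V] (G : SimpleGraph V) (C C' : V → ℕ) : Prop :=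
  ∃ u v, G.Adj u v ∧ 2 ≤ C u ∧
    C' = fun w => if w = u then C u - 2 else if w = v then C v + 1 else C w

/-- A configuration `C` is `r`-solvable if some (possibly empty) sequence of
pebbling moves starting from `C` produces a configuration with at least one
pebble on `r`. -/
def PebblingSolvable {V : Type} [DecidableEq V] (G : SimpleGraph V) (C : V → ℕ) (r : V) : Prop :=
  ∃ C' : V → ℕ, Relation.ReflTransGen (PebblingMove G) C C' ∧ 1 ≤ C' r

/-- The pebbling number of `G`: the least `t` such that for every target
vertex `r`, every configuration of size `t` is `r`-solvable. -/
noncomputable def pebblingNumber {V : Type} [DecidableEq V] [Fintype V] (G : SimpleGraph V) : ℕ :=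
  sInf {t : ℕ | ∀ (r : V) (C : V → ℕ), (∑ v, C v) = t → PebblingSolvable G C r}

/-- The 12 vertices of the Flower snark `J₃`; `vm` denotes `v_{-1}`,
`xm` denotes `x_{-1}`, etc. -/
inductive J3V : Type
  | v0 | v1 | vm | x0 | x1 | xm | y0 | y1 | ym | z0 | z1 | zm
  deriving DecidableEq

instance : Fintype J3V :=
  ⟨{J3V.v0, J3V.v1, J3V.vm, J3V.x0, J3V.x1, J3V.xm, J3V.y0, J3V.y1, J3V.ym, J3V.z0, J3V.z1, J3V.zm},
    by intro x; cases x <;> first | decide | simp⟩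

open J3V in
/-- The Flower snark `J₃` (Tietze's graph), with its 18 edges. -/
def J3 : SimpleGraph J3V := SimpleGraph.fromEdgeSet
  ({s(z0, v0), s(z0, x0), s(z0, y0), s(v0, v1), s(v0, vm),
    s(x0, x1), s(x0, xm), s(y0, y1), s(y0, ym), s(v1, vm),
    s(v1, z1), s(vm, zm), s(x1, z1), s(y1, z1), s(xm, zm),
    s(ym, zm), s(xm, y1), s(x1, ym)} : Set (Sym2 J3V))

lemma move_many {V : Type} [DecidableEq V] (G : SimpleGraph V) {u v : V} (huv : G.Adj u v)
    (k : ℕ) (C : V → ℕ) (hk : 2*k ≤ C u) :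
    Relation.ReflTransGen (PebblingMove G) C
      (fun w => if w = u then C u - 2*k else if w = v then C v + k else C w) := by
  induction k generalizing C with
  | zero =>
    have : (fun w => if w = u then C u - 2*0 else if w = v then C v + 0 else C w) = C := by
      funext w
      by_cases h1 : w = u <;> by_cases h2 : w = v <;> simp_all
    rw [this]
  | succ k ih =>
    have hne : u ≠ v := huv.ne
    have step : PebblingMove G C
        (fun w => if w = u then C u - 2 else if w = v then C v + 1 else C w) :=
      ⟨u, v, huv, by omega, rfl⟩
    have h2 : 2*k ≤ (fun w => if w = u then C u - 2 else if w = v then C v + 1 else C w) u := by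
      simp; omega
    refine Relation.ReflTransGen.head step ?_
    have := ih (fun w => if w = u then C u - 2 else if w = v then C v + 1 else C w) h2
    convert this using 1
    funext w
    by_cases h1 : w = u <;> by_cases h2 : w = v <;> simp_all <;> omega

lemma solvable_A (C : J3V → ℕ) (h9 : 9 ≤ C J3V.z1 + C J3V.x1 + C J3V.y1) :
    PebblingSolvable J3 C J3V.v0 := by
  have a1 : J3.Adj J3V.x1 J3V.z1 := by simp [J3]
  have a2 : J3.Adj J3V.y1 J3V.z1 := by simp [J3]
  have a3 : J3.Adj J3V.z1 J3V.v1 := by simp [J3]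
  have a4 : J3.Adj J3V.v1 J3V.v0 := by simp [J3]
  set a := C J3V.x1 / 2 with ha
  set b := C J3V.y1 / 2 with hb
  have ch := Relation.ReflTransGen.trans (move_many J3 a1 a C (by omega))
    (Relation.ReflTransGen.trans (move_many J3 a2 b _ (by simp <;> omega))
    (Relation.ReflTransGen.trans (move_many J3 a3 2 _ (by simp <;> omega))
    (move_many J3 a4 1 _ (by simp <;> omega))))
  exact ⟨_, ch, by simp⟩

lemma solvable_B (C : J3V → ℕ) (h9 : 9 ≤ C J3V.zm + C J3V.xm + C J3V.ym) :
    PebblingSolvable J3 C J3V.v0 := by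
  have a1 : J3.Adj J3V.xm J3V.zm := by simp [J3]
  have a2 : J3.Adj J3V.ym J3V.zm := by simp [J3]
  have a3 : J3.Adj J3V.zm J3V.vm := by simp [J3]
  have a4 : J3.Adj J3V.vm J3V.v0 := by simp [J3]
  set a := C J3V.xm / 2 with ha
  set b := C J3V.ym / 2 with hb
  have ch := Relation.ReflTransGen.trans (move_many J3 a1 a C (by omega))
    (Relation.ReflTransGen.trans (move_many J3 a2 b _ (by simp <;> omega))
    (Relation.ReflTransGen.trans (move_many J3 a3 2 _ (by simp <;> omega))
    (move_many J3 a4 1 _ (by simp <;> omega))))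
  exact ⟨_, ch, by simp⟩

lemma solvable_E (C : J3V → ℕ) (h5 : 5 ≤ C J3V.x0 + C J3V.y0) :
    PebblingSolvable J3 C J3V.v0 := by
  have a1 : J3.Adj J3V.x0 J3V.z0 := by simp [J3]
  have a2 : J3.Adj J3V.y0 J3V.z0 := by simp [J3]
  have a3 : J3.Adj J3V.z0 J3V.v0 := by simp [J3]
  set a := C J3V.x0 / 2 with ha
  set b := C J3V.y0 / 2 with hb
  have ch := Relation.ReflTransGen.trans (move_many J3 a1 a C (by omega))
    (Relation.ReflTransGen.trans (move_many J3 a2 b _ (by simp <;> omega))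
    (move_many J3 a3 1 _ (by simp <;> omega)))
  exact ⟨_, ch, by simp⟩

/-- For a `v₀`-unsolvable configuration `C` on `J₃` with
`C(z₀) = C(v₁) = C(v₋₁) = 0`, and `A = {z₁, x₁, y₁}`,
`B = {z₋₁, x₋₁, y₋₁}`, `E = {x₀, y₀}`: `C(A) ≤ 8`, `C(B) ≤ 8`, and
`C(E) ≤ 4`. -/
theorem J3_v0_unsolvable_bounds (C : J3V → ℕ)
    (h : ¬ PebblingSolvable J3 C J3V.v0)
    (hz0 : C J3V.z0 = 0) (hv1 : C J3V.v1 = 0) (hvm : C J3V.vm = 0) :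
    (∑ v ∈ ({J3V.z1, J3V.x1, J3V.y1} : Finset J3V), C v) ≤ 8 ∧
    (∑ v ∈ ({J3V.zm, J3V.xm, J3V.ym} : Finset J3V), C v) ≤ 8 ∧
    (∑ v ∈ ({J3V.x0, J3V.y0} : Finset J3V), C v) ≤ 4 := by
  have e1 : (∑ v ∈ ({J3V.z1, J3V.x1, J3V.y1} : Finset J3V), C v)
      = C J3V.z1 + C J3V.x1 + C J3V.y1 := by
    rw [Finset.sum_insert (by decide), Finset.sum_pair (by decide)]; ring
  have e2 : (∑ v ∈ ({J3V.zm, J3V.xm, J3V.ym} : Finset J3V), C v)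
      = C J3V.zm + C J3V.xm + C J3V.ym := by
    rw [Finset.sum_insert (by decide), Finset.sum_pair (by decide)]; ring
  have e3 : (∑ v ∈ ({J3V.x0, J3V.y0} : Finset J3V), C v) = C J3V.x0 + C J3V.y0 :=
    Finset.sum_pair (by decide)
  rw [e1, e2, e3]
  refine ⟨?_, ?_, ?_⟩ <;> by_contra hc <;> push_neg at hc
  · exact h (solvable_A C (by omega))
  · exact h (solvable_B C (by omega))
  · exact h (solvable_E C (by omega))
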